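/- Let μ be a probability measure on ℝ × ℝ with marginal distributions μ₁ and μ₂, and assume that (x,y) ↦ x², (x,y) ↦ y² and (x,y) ↦ x²y² are integrable with respect to μ. Let F(x,y) = μ{(a,b) : a ≤ x ∧ b ≤ y} be the joint cumulative distribution function and F₁(x) = μ₁(−∞,x], F₂(y) = μ₂(−∞,y] the marginal cumulative distribution functions. Then (1/4)·[ μ₁₂ − 2·μ₃ + m₁·m₂ ] = ∫_ℝ ∫_ℝ ( F(x,y) − F₁(x)·F₂(y) )² dx dy, where μ₁₂ = ∫∫ |x₁−x₂|·|y₁−y₂| d(μ⊗μ), μ₃ = ∫ g_{μ₁}(x)·g_{μ₂}(y) dμ(x,y), m₁ = ∫∫|x₁−x₂| d(μ₁⊗μ₁), m₂ = ∫∫|y₁−y₂| d(μ₂⊗μ₂). -/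

import Mathlib

open MeasureTheory Set

/-- `g_ν(z) = ∫ |z - w| dν(w)`. -/
noncomputable def gfun (ν : Measure ℝ) (z : ℝ) : ℝ := ∫ w, |z - w| ∂ν

/-- `m(ν) = ∫∫ |w₁ - w₂| d(ν ⊗ ν)`. -/
noncomputable def mfun (ν : Measure ℝ) : ℝ := ∫ p : ℝ × ℝ, |p.1 - p.2| ∂(ν.prod ν)

set_option linter.unusedSectionVars false
set_option linter.unreachableTactic false
set_option linter.unusedTactic false

noncomputable def Ind (a x : ℝ) : ℝ := if a ≤ x then 1 else 0

lemma Ind_measurable : Measurable (fun z : ℝ × ℝ => Ind z.1 z.2) := by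
  unfold Ind
  exact Measurable.ite (measurableSet_le measurable_fst measurable_snd)
    measurable_const measurable_const

lemma abs_Ind_le (a x : ℝ) : |Ind a x| ≤ 1 := by
  unfold Ind; split_ifs <;> simp

lemma abs_Ind_sub_le (a b x : ℝ) : |Ind a x - Ind b x| ≤ 1 := by
  unfold Ind; split_ifs <;> simp

lemma D_eq (s t : ℝ) : (fun x => Ind s x - Ind t x)
    = fun x => (Ico s t).indicator (fun _ => (1:ℝ)) x - (Ico t s).indicator (fun _ => (1:ℝ)) x := by
  funext x
  unfold Ind
  by_cases hs : s ≤ x <;> by_cases ht : t ≤ x <;>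
    simp [indicator_apply, Ico, hs, ht] <;> rw [if_pos (by linarith)]

lemma absD_eq (s t : ℝ) : (fun x => |Ind s x - Ind t x|)
    = fun x => (Ico s t).indicator (fun _ => (1:ℝ)) x + (Ico t s).indicator (fun _ => (1:ℝ)) x := by
  funext x
  unfold Ind
  by_cases hs : s ≤ x <;> by_cases ht : t ≤ x <;>
    simp [indicator_apply, Ico, hs, ht] <;> rw [if_pos (by linarith)]

lemma intIco (s t : ℝ) : Integrable ((Ico s t).indicator (fun _ => (1:ℝ))) := by
  rw [integrable_indicator_iff measurableSet_Ico]
  exact integrableOn_const measure_Ico_lt_top.ne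

lemma intIco_val (s t : ℝ) : ∫ x, (Ico s t).indicator (fun _ => (1:ℝ)) x = max (t - s) 0 := by
  rw [integral_indicator measurableSet_Ico]
  simp [Real.volume_Ico]

lemma intD (s t : ℝ) : Integrable (fun x => Ind s x - Ind t x) := by
  rw [D_eq]; exact (intIco s t).sub (intIco t s)

lemma intD_val (s t : ℝ) : ∫ x, (Ind s x - Ind t x) = t - s := by
  rw [D_eq, integral_sub (intIco s t) (intIco t s), intIco_val, intIco_val]
  rcases le_total s t with h | h
  · rw [max_eq_left (by linarith), max_eq_right (by linarith)]; ring
  · rw [max_eq_right (by linarith), max_eq_left (by linarith)]; ring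

lemma int_absD (s t : ℝ) : Integrable (fun x => |Ind s x - Ind t x|) := (intD s t).abs

lemma int_absD_val (s t : ℝ) : ∫ x, |Ind s x - Ind t x| = |t - s| := by
  rw [absD_eq, integral_add (intIco s t) (intIco t s), intIco_val, intIco_val]
  rcases le_total s t with h | h
  · rw [max_eq_left (by linarith), max_eq_right (by linarith), abs_of_nonneg (by linarith)]; ring
  · rw [max_eq_right (by linarith), max_eq_left (by linarith), abs_of_nonpos (by linarith)]; ring

lemma mulInd (s t x : ℝ) : Ind s x * Ind t x = Ind (max s t) x := by
  unfold Ind; split_ifs with h1 h2 h3 <;> simp_all [max_le_iff] <;> first | rfl | linarith | (intro h; linarith)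

lemma U_eq (a a' c c' : ℝ) :
    (fun x => (Ind a x - Ind a' x) * (Ind c x - Ind c' x))
      = fun x => (Ind (max a c) x - Ind (max a c') x)
          + (Ind (max a' c') x - Ind (max a' c) x) := by
  funext x
  have e1 := mulInd a c x
  have e2 := mulInd a c' x
  have e3 := mulInd a' c x
  have e4 := mulInd a' c' x
  nlinarith [e1, e2, e3, e4]

lemma intU (a a' c c' : ℝ) :
    Integrable (fun x => (Ind a x - Ind a' x) * (Ind c x - Ind c' x)) := by
  rw [U_eq]; exact (intD _ _).add (intD _ _)

lemma max_formula (u v : ℝ) : max u v = (u + v + |u - v|) / 2 := by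
  rcases le_total u v with h | h
  · rw [max_eq_right h, abs_of_nonpos (by linarith)]; ring
  · rw [max_eq_left h, abs_of_nonneg (by linarith)]; ring

lemma intU_val (a a' c c' : ℝ) :
    ∫ x, (Ind a x - Ind a' x) * (Ind c x - Ind c' x)
      = (|a - c'| + |a' - c| - |a - c| - |a' - c'|) / 2 := by
  rw [U_eq, integral_add (intD _ _) (intD _ _), intD_val, intD_val]
  rw [max_formula a c, max_formula a c', max_formula a' c, max_formula a' c']
  ring

lemma int_absU_le (a a' c c' : ℝ) :
    ∫ x, |(Ind a x - Ind a' x) * (Ind c x - Ind c' x)| ≤ |a' - a| := by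
  have h1 : ∀ x, |(Ind a x - Ind a' x) * (Ind c x - Ind c' x)| ≤ |Ind a x - Ind a' x| := by
    intro x
    rw [abs_mul]
    calc |Ind a x - Ind a' x| * |Ind c x - Ind c' x| ≤ |Ind a x - Ind a' x| * 1 :=
          mul_le_mul_of_nonneg_left (abs_Ind_sub_le _ _ _) (abs_nonneg _)
      _ = |Ind a x - Ind a' x| := mul_one _
  calc ∫ x, |(Ind a x - Ind a' x) * (Ind c x - Ind c' x)|
      ≤ ∫ x, |Ind a x - Ind a' x| :=
        integral_mono (intU a a' c c').abs (intD a a').abs h1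
    _ = |a' - a| := int_absD_val a a'

lemma int_absU_le2 (a a' c c' : ℝ) :
    ∫ x, |(Ind a x - Ind a' x) * (Ind c x - Ind c' x)| ≤ |c' - c| := by
  have h1 : ∀ x, |(Ind a x - Ind a' x) * (Ind c x - Ind c' x)| ≤ |Ind c x - Ind c' x| := by
    intro x
    rw [abs_mul]
    calc |Ind a x - Ind a' x| * |Ind c x - Ind c' x| ≤ 1 * |Ind c x - Ind c' x| :=
          mul_le_mul_of_nonneg_right (abs_Ind_sub_le _ _ _) (abs_nonneg _)
      _ = |Ind c x - Ind c' x| := one_mul _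
  calc ∫ x, |(Ind a x - Ind a' x) * (Ind c x - Ind c' x)|
      ≤ ∫ x, |Ind c x - Ind c' x| :=
        integral_mono (intU a a' c c').abs (intD c c').abs h1
    _ = |c' - c| := int_absD_val c c'

noncomputable def f4 : (ℝ × ℝ) × (ℝ × ℝ) → ℝ := fun z => |z.1.1 - z.2.1| * |z.1.2 - z.2.2|

lemma f4_measurable : Measurable f4 := by
  unfold f4
  exact (((measurable_fst.comp measurable_fst).sub (measurable_fst.comp measurable_snd)).abs.mul
    ((measurable_snd.comp measurable_fst).sub (measurable_snd.comp measurable_snd)).abs)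

lemma int_of_bdd {α : Type*} [MeasurableSpace α] {ρ : Measure α} [IsFiniteMeasure ρ]
    {f : α → ℝ} (hm : AEStronglyMeasurable f ρ) {C : ℝ} (h : ∀ a, |f a| ≤ C) :
    Integrable f ρ :=
  (integrable_const C).mono' hm (ae_of_all _ (by simpa [Real.norm_eq_abs] using h))

lemma abs_sub_le' (a c : ℝ) : |a - c| ≤ |a| + |c| := by
  calc |a - c| = |a + -c| := by ring_nf
    _ ≤ |a| + |-c| := abs_add_le _ _
    _ = |a| + |c| := by rw [abs_neg]

lemma int_f4 {ρ₁ ρ₂ : Measure (ℝ × ℝ)} [IsFiniteMeasure ρ₁] [IsFiniteMeasure ρ₂]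
    (h1x : Integrable (fun p : ℝ × ℝ => |p.1|) ρ₁)
    (h1y : Integrable (fun p : ℝ × ℝ => |p.2|) ρ₁)
    (h1xy : Integrable (fun p : ℝ × ℝ => |p.1| * |p.2|) ρ₁)
    (h2x : Integrable (fun p : ℝ × ℝ => |p.1|) ρ₂)
    (h2y : Integrable (fun p : ℝ × ℝ => |p.2|) ρ₂)
    (h2xy : Integrable (fun p : ℝ × ℝ => |p.1| * |p.2|) ρ₂) :
    Integrable f4 (ρ₁.prod ρ₂) := by
  have g1 : Integrable (fun z : (ℝ × ℝ) × (ℝ × ℝ) => (|z.1.1| * |z.1.2|) * 1) (ρ₁.prod ρ₂) :=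
    h1xy.mul_prod (integrable_const (1:ℝ))
  have g2 : Integrable (fun z : (ℝ × ℝ) × (ℝ × ℝ) => |z.1.1| * |z.2.2|) (ρ₁.prod ρ₂) :=
    h1x.mul_prod h2y
  have g3 : Integrable (fun z : (ℝ × ℝ) × (ℝ × ℝ) => |z.1.2| * |z.2.1|) (ρ₁.prod ρ₂) :=
    h1y.mul_prod h2x
  have g4 : Integrable (fun z : (ℝ × ℝ) × (ℝ × ℝ) => (1:ℝ) * (|z.2.1| * |z.2.2|)) (ρ₁.prod ρ₂) :=
    (integrable_const (1:ℝ)).mul_prod h2xy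
  have hg : Integrable (fun z : (ℝ × ℝ) × (ℝ × ℝ) =>
      (|z.1.1| * |z.1.2|) * 1 + |z.1.1| * |z.2.2| + |z.1.2| * |z.2.1|
        + (1:ℝ) * (|z.2.1| * |z.2.2|)) (ρ₁.prod ρ₂) := ((g1.add g2).add g3).add g4
  refine hg.mono' f4_measurable.aestronglyMeasurable (ae_of_all _ fun z => ?_)
  have h1 : |z.1.1 - z.2.1| ≤ |z.1.1| + |z.2.1| := abs_sub_le' _ _
  have h2 : |z.1.2 - z.2.2| ≤ |z.1.2| + |z.2.2| := abs_sub_le' _ _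
  have : f4 z ≤ (|z.1.1| + |z.2.1|) * (|z.1.2| + |z.2.2|) :=
    mul_le_mul h1 h2 (abs_nonneg _) (by positivity)
  rw [Real.norm_eq_abs, abs_of_nonneg (by unfold f4; positivity)]
  calc f4 z ≤ (|z.1.1| + |z.2.1|) * (|z.1.2| + |z.2.2|) := this
    _ = (|z.1.1| * |z.1.2|) * 1 + |z.1.1| * |z.2.2| + |z.1.2| * |z.2.1|
        + (1:ℝ) * (|z.2.1| * |z.2.2|) := by ring

lemma mp_int_eq {α β : Type*} [MeasurableSpace α] [MeasurableSpace β]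
    {ρ : Measure α} {ν : Measure β} {T : α → β}
    (hT : MeasureTheory.MeasurePreserving T ρ ν) {g : β → ℝ} (hg : AEStronglyMeasurable g ν) :
    (∫ a, g (T a) ∂ρ = ∫ b, g b ∂ν) ∧ (Integrable g ν → Integrable (fun a => g (T a)) ρ) := by
  constructor
  · rw [← hT.map_eq] at hg ⊢
    rw [integral_map hT.measurable.aemeasurable hg]
  · intro h
    exact (hT.integrable_comp hg).2 h

section
variable (μ : Measure (ℝ × ℝ)) [IsProbabilityMeasure μ]

lemma mpP1 : MeasurePreserving (Prod.fst : (ℝ×ℝ)×(ℝ×ℝ) → ℝ×ℝ) (μ.prod μ) μ :=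
  ⟨measurable_fst, by simp⟩

lemma mpP2 : MeasurePreserving (Prod.snd : (ℝ×ℝ)×(ℝ×ℝ) → ℝ×ℝ) (μ.prod μ) μ :=
  ⟨measurable_snd, by simp⟩

lemma mpX : MeasurePreserving (Prod.fst : ℝ×ℝ → ℝ) μ (μ.map Prod.fst) :=
  ⟨measurable_fst, rfl⟩

lemma mpY : MeasurePreserving (Prod.snd : ℝ×ℝ → ℝ) μ (μ.map Prod.snd) :=
  ⟨measurable_snd, rfl⟩

lemma mc1 : MeasurePreserving (Prod.map (Prod.fst : ℝ×ℝ → ℝ) (Prod.snd : ℝ×ℝ → ℝ))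
    (μ.prod μ) ((μ.map Prod.fst).prod (μ.map Prod.snd)) :=
  (mpX μ).prod (mpY μ)

lemma mc2 : MeasurePreserving (fun r : (ℝ×ℝ)×(ℝ×ℝ) => (r.2.1, r.1.2))
    (μ.prod μ) ((μ.map Prod.fst).prod (μ.map Prod.snd)) :=
  (mc1 μ).comp Measure.measurePreserving_swap

end

section
variable (ν : Measure ℝ) [IsProbabilityMeasure ν]

lemma int_abs_sub (h : Integrable (fun t : ℝ => |t|) ν) :
    Integrable (fun p : ℝ × ℝ => |p.1 - p.2|) (ν.prod ν) := by
  have g1 : Integrable (fun z : ℝ × ℝ => |z.1| * 1) (ν.prod ν) :=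
    h.mul_prod (integrable_const (1:ℝ))
  have g2 : Integrable (fun z : ℝ × ℝ => (1:ℝ) * |z.2|) (ν.prod ν) :=
    (integrable_const (1:ℝ)).mul_prod h
  refine ((g1.add g2).mono' ?_ (ae_of_all _ fun z => ?_))
  · exact ((measurable_fst.sub measurable_snd).abs).aestronglyMeasurable
  · rw [Real.norm_eq_abs, abs_abs]
    calc |z.1 - z.2| ≤ |z.1| + |z.2| := abs_sub_le' _ _
      _ = |z.1| * 1 + 1 * |z.2| := by ring

lemma mfun_eq (h : Integrable (fun t : ℝ => |t|) ν) :
    mfun ν = ∫ s, gfun ν s ∂ν := by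
  unfold mfun
  rw [integral_prod _ (int_abs_sub ν h)]
  rfl

end

section
variable (μ : Measure (ℝ × ℝ)) [IsProbabilityMeasure μ]

instance : IsProbabilityMeasure (μ.map Prod.fst) :=
  Measure.isProbabilityMeasure_map measurable_fst.aemeasurable

instance : IsProbabilityMeasure (μ.map Prod.snd) :=
  Measure.isProbabilityMeasure_map measurable_snd.aemeasurable

lemma L3val (hI : Integrable f4 (μ.prod ((μ.map Prod.fst).prod (μ.map Prod.snd)))) :
    ∫ z, f4 z ∂(μ.prod ((μ.map Prod.fst).prod (μ.map Prod.snd)))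
      = ∫ p, gfun (μ.map Prod.fst) p.1 * gfun (μ.map Prod.snd) p.2 ∂μ := by
  rw [integral_prod _ hI]
  congr 1
  funext p
  have : ∀ w : ℝ × ℝ, f4 (p, w) = |p.1 - w.1| * |p.2 - w.2| := fun w => rfl
  simp_rw [this]
  rw [integral_prod_mul (μ := μ.map Prod.fst) (ν := μ.map Prod.snd)
    (fun c => |p.1 - c|) (fun d => |p.2 - d|)]
  rfl

lemma L4val
    (hI : Integrable f4 (((μ.map Prod.fst).prod (μ.map Prod.snd)).prod
      ((μ.map Prod.fst).prod (μ.map Prod.snd))))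
    (h1 : Integrable (fun t : ℝ => |t|) (μ.map Prod.fst))
    (h2 : Integrable (fun t : ℝ => |t|) (μ.map Prod.snd)) :
    ∫ z, f4 z ∂(((μ.map Prod.fst).prod (μ.map Prod.snd)).prod
      ((μ.map Prod.fst).prod (μ.map Prod.snd)))
      = mfun (μ.map Prod.fst) * mfun (μ.map Prod.snd) := by
  rw [integral_prod _ hI]
  have step : ∀ s : ℝ × ℝ, ∫ w, f4 (s, w) ∂((μ.map Prod.fst).prod (μ.map Prod.snd))
      = gfun (μ.map Prod.fst) s.1 * gfun (μ.map Prod.snd) s.2 := by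
    intro s
    have : ∀ w : ℝ × ℝ, f4 (s, w) = |s.1 - w.1| * |s.2 - w.2| := fun w => rfl
    simp_rw [this]
    rw [integral_prod_mul (μ := μ.map Prod.fst) (ν := μ.map Prod.snd)
      (fun c => |s.1 - c|) (fun d => |s.2 - d|)]
    rfl
  simp_rw [step]
  rw [integral_prod_mul (μ := μ.map Prod.fst) (ν := μ.map Prod.snd)
    (gfun (μ.map Prod.fst)) (gfun (μ.map Prod.snd))]
  rw [mfun_eq _ h1, mfun_eq _ h2]

end

lemma measurable_Ind_comp {α : Type*} [MeasurableSpace α] {f : α → ℝ} (hf : Measurable f)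
    (x : ℝ) : Measurable (fun a => Ind (f a) x) :=
  Ind_measurable.comp (hf.prodMk measurable_const)

section
variable (μ : Measure (ℝ × ℝ)) [IsProbabilityMeasure μ] (x y : ℝ)

lemma Fjoint : ∫ p, Ind p.1 x * Ind p.2 y ∂μ = (μ {p : ℝ × ℝ | p.1 ≤ x ∧ p.2 ≤ y}).toReal := by
  have hs : MeasurableSet {p : ℝ × ℝ | p.1 ≤ x ∧ p.2 ≤ y} :=
    (measurable_fst measurableSet_Iic).inter (measurable_snd measurableSet_Iic)
  have : (fun p : ℝ × ℝ => Ind p.1 x * Ind p.2 y)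
      = ({p : ℝ × ℝ | p.1 ≤ x ∧ p.2 ≤ y}).indicator (fun _ => (1:ℝ)) := by
    funext p
    simp only [Ind, indicator_apply, mem_setOf_eq]
    by_cases h1 : p.1 ≤ x <;> by_cases h2 : p.2 ≤ y <;> simp [h1, h2]
  rw [this, integral_indicator_const _ hs]
  simp
  rfl

lemma Fmarg1 : ∫ p : ℝ × ℝ, Ind p.1 x ∂μ = ((μ.map Prod.fst) (Iic x)).toReal := by
  have hs : MeasurableSet {p : ℝ × ℝ | p.1 ≤ x} := measurable_fst measurableSet_Iic
  have : (fun p : ℝ × ℝ => Ind p.1 x)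
      = ({p : ℝ × ℝ | p.1 ≤ x}).indicator (fun _ => (1:ℝ)) := by
    funext p
    simp only [Ind, indicator_apply, mem_setOf_eq]
  rw [this, integral_indicator_const _ hs, Measure.map_apply measurable_fst measurableSet_Iic]
  simp
  rfl

lemma Fmarg2 : ∫ p : ℝ × ℝ, Ind p.2 y ∂μ = ((μ.map Prod.snd) (Iic y)).toReal := by
  have hs : MeasurableSet {p : ℝ × ℝ | p.2 ≤ y} := measurable_snd measurableSet_Iic
  have : (fun p : ℝ × ℝ => Ind p.2 y)
      = ({p : ℝ × ℝ | p.2 ≤ y}).indicator (fun _ => (1:ℝ)) := by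
    funext p
    simp only [Ind, indicator_apply, mem_setOf_eq]
  rw [this, integral_indicator_const _ hs, Measure.map_apply measurable_snd measurableSet_Iic]
  simp
  rfl

lemma covrep :
    (μ {p : ℝ × ℝ | p.1 ≤ x ∧ p.2 ≤ y}).toReal
        - ((μ.map Prod.fst) (Iic x)).toReal * ((μ.map Prod.snd) (Iic y)).toReal
      = (1/2) * ∫ P, (Ind P.1.1 x - Ind P.2.1 x) * (Ind P.1.2 y - Ind P.2.2 y) ∂(μ.prod μ) := by
  have m11 : Measurable (fun P : (ℝ×ℝ)×(ℝ×ℝ) => Ind P.1.1 x * Ind P.1.2 y) :=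
    (measurable_Ind_comp (measurable_fst.comp measurable_fst) x).mul
      (measurable_Ind_comp (measurable_snd.comp measurable_fst) y)
  have m12 : Measurable (fun P : (ℝ×ℝ)×(ℝ×ℝ) => Ind P.1.1 x * Ind P.2.2 y) :=
    (measurable_Ind_comp (measurable_fst.comp measurable_fst) x).mul
      (measurable_Ind_comp (measurable_snd.comp measurable_snd) y)
  have m21 : Measurable (fun P : (ℝ×ℝ)×(ℝ×ℝ) => Ind P.2.1 x * Ind P.1.2 y) :=
    (measurable_Ind_comp (measurable_fst.comp measurable_snd) x).mul
      (measurable_Ind_comp (measurable_snd.comp measurable_fst) y)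
  have m22 : Measurable (fun P : (ℝ×ℝ)×(ℝ×ℝ) => Ind P.2.1 x * Ind P.2.2 y) :=
    (measurable_Ind_comp (measurable_fst.comp measurable_snd) x).mul
      (measurable_Ind_comp (measurable_snd.comp measurable_snd) y)
  have bdd : ∀ (a b c d : ℝ), |Ind a c * Ind b d| ≤ 1 := by
    intro a b c d
    rw [abs_mul]
    calc |Ind a c| * |Ind b d| ≤ 1 * 1 :=
      mul_le_mul (abs_Ind_le _ _) (abs_Ind_le _ _) (abs_nonneg _) zero_le_one
    _ = 1 := one_mul 1
  have i11 : Integrable (fun P : (ℝ×ℝ)×(ℝ×ℝ) => Ind P.1.1 x * Ind P.1.2 y) (μ.prod μ) :=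
    int_of_bdd m11.aestronglyMeasurable (fun P => bdd _ _ _ _)
  have i12 : Integrable (fun P : (ℝ×ℝ)×(ℝ×ℝ) => Ind P.1.1 x * Ind P.2.2 y) (μ.prod μ) :=
    int_of_bdd m12.aestronglyMeasurable (fun P => bdd _ _ _ _)
  have i21 : Integrable (fun P : (ℝ×ℝ)×(ℝ×ℝ) => Ind P.2.1 x * Ind P.1.2 y) (μ.prod μ) :=
    int_of_bdd m21.aestronglyMeasurable (fun P => bdd _ _ _ _)
  have i22 : Integrable (fun P : (ℝ×ℝ)×(ℝ×ℝ) => Ind P.2.1 x * Ind P.2.2 y) (μ.prod μ) :=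
    int_of_bdd m22.aestronglyMeasurable (fun P => bdd _ _ _ _)
  have expand : (fun P : (ℝ×ℝ)×(ℝ×ℝ) =>
      (Ind P.1.1 x - Ind P.2.1 x) * (Ind P.1.2 y - Ind P.2.2 y))
      = fun P => (Ind P.1.1 x * Ind P.1.2 y - Ind P.1.1 x * Ind P.2.2 y)
          - (Ind P.2.1 x * Ind P.1.2 y - Ind P.2.1 x * Ind P.2.2 y) := by
    funext P; ring
  have iA : Integrable (fun P : (ℝ×ℝ)×(ℝ×ℝ) =>
      Ind P.1.1 x * Ind P.1.2 y - Ind P.1.1 x * Ind P.2.2 y) (μ.prod μ) := i11.sub i12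
  have iB : Integrable (fun P : (ℝ×ℝ)×(ℝ×ℝ) =>
      Ind P.2.1 x * Ind P.1.2 y - Ind P.2.1 x * Ind P.2.2 y) (μ.prod μ) := i21.sub i22
  rw [expand, integral_sub iA iB, integral_sub i11 i12, integral_sub i21 i22]
  have v11 : ∫ P : (ℝ×ℝ)×(ℝ×ℝ), Ind P.1.1 x * Ind P.1.2 y ∂(μ.prod μ)
      = (μ {p : ℝ × ℝ | p.1 ≤ x ∧ p.2 ≤ y}).toReal := by
    have : (fun P : (ℝ×ℝ)×(ℝ×ℝ) => Ind P.1.1 x * Ind P.1.2 y)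
        = fun P => (Ind P.1.1 x * Ind P.1.2 y) * (fun _ : ℝ×ℝ => (1:ℝ)) P.2 := by
      funext P; simp
    rw [this, integral_prod_mul (fun p : ℝ×ℝ => Ind p.1 x * Ind p.2 y) (fun _ => (1:ℝ))]
    simp [Fjoint μ x y]
  have v22 : ∫ P : (ℝ×ℝ)×(ℝ×ℝ), Ind P.2.1 x * Ind P.2.2 y ∂(μ.prod μ)
      = (μ {p : ℝ × ℝ | p.1 ≤ x ∧ p.2 ≤ y}).toReal := by
    have : (fun P : (ℝ×ℝ)×(ℝ×ℝ) => Ind P.2.1 x * Ind P.2.2 y)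
        = fun P => (fun _ : ℝ×ℝ => (1:ℝ)) P.1 * (Ind P.2.1 x * Ind P.2.2 y) := by
      funext P; simp
    rw [this, integral_prod_mul (fun _ => (1:ℝ)) (fun p : ℝ×ℝ => Ind p.1 x * Ind p.2 y)]
    simp [Fjoint μ x y]
  have v12 : ∫ P : (ℝ×ℝ)×(ℝ×ℝ), Ind P.1.1 x * Ind P.2.2 y ∂(μ.prod μ)
      = ((μ.map Prod.fst) (Iic x)).toReal * ((μ.map Prod.snd) (Iic y)).toReal := by
    rw [integral_prod_mul (fun p : ℝ×ℝ => Ind p.1 x) (fun p : ℝ×ℝ => Ind p.2 y),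
      Fmarg1 μ x, Fmarg2 μ y]
  have v21 : ∫ P : (ℝ×ℝ)×(ℝ×ℝ), Ind P.2.1 x * Ind P.1.2 y ∂(μ.prod μ)
      = ((μ.map Prod.fst) (Iic x)).toReal * ((μ.map Prod.snd) (Iic y)).toReal := by
    have e : (fun P : (ℝ×ℝ)×(ℝ×ℝ) => Ind P.2.1 x * Ind P.1.2 y)
        = fun P => (fun p : ℝ×ℝ => Ind p.2 y) P.1 * (fun p : ℝ×ℝ => Ind p.1 x) P.2 := by
      funext P; ring
    rw [e, integral_prod_mul (fun p : ℝ×ℝ => Ind p.2 y) (fun p : ℝ×ℝ => Ind p.1 x),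
      Fmarg1 μ x, Fmarg2 μ y, mul_comm]
  rw [v11, v22, v12, v21]
  ring

end

noncomputable def GG (q : ((ℝ×ℝ)×(ℝ×ℝ)) × ((ℝ×ℝ)×(ℝ×ℝ))) (z : ℝ × ℝ) : ℝ :=
  ((Ind q.1.1.1 z.1 - Ind q.1.2.1 z.1) * (Ind q.2.1.1 z.1 - Ind q.2.2.1 z.1)) *
    ((Ind q.1.1.2 z.2 - Ind q.1.2.2 z.2) * (Ind q.2.1.2 z.2 - Ind q.2.2.2 z.2))

noncomputable def tA (q : ((ℝ×ℝ)×(ℝ×ℝ)) × ((ℝ×ℝ)×(ℝ×ℝ))) : ℝ := |q.1.1.1 - q.2.2.1|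
noncomputable def tB (q : ((ℝ×ℝ)×(ℝ×ℝ)) × ((ℝ×ℝ)×(ℝ×ℝ))) : ℝ := |q.1.2.1 - q.2.1.1|
noncomputable def tC (q : ((ℝ×ℝ)×(ℝ×ℝ)) × ((ℝ×ℝ)×(ℝ×ℝ))) : ℝ := |q.1.1.1 - q.2.1.1|
noncomputable def tD (q : ((ℝ×ℝ)×(ℝ×ℝ)) × ((ℝ×ℝ)×(ℝ×ℝ))) : ℝ := |q.1.2.1 - q.2.2.1|
noncomputable def tE (q : ((ℝ×ℝ)×(ℝ×ℝ)) × ((ℝ×ℝ)×(ℝ×ℝ))) : ℝ := |q.1.1.2 - q.2.2.2|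
noncomputable def tF (q : ((ℝ×ℝ)×(ℝ×ℝ)) × ((ℝ×ℝ)×(ℝ×ℝ))) : ℝ := |q.1.2.2 - q.2.1.2|
noncomputable def tG (q : ((ℝ×ℝ)×(ℝ×ℝ)) × ((ℝ×ℝ)×(ℝ×ℝ))) : ℝ := |q.1.1.2 - q.2.1.2|
noncomputable def tH (q : ((ℝ×ℝ)×(ℝ×ℝ)) × ((ℝ×ℝ)×(ℝ×ℝ))) : ℝ := |q.1.2.2 - q.2.2.2|

lemma measurable_Ind2 {α : Type*} [MeasurableSpace α] {f g : α → ℝ}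
    (hf : Measurable f) (hg : Measurable g) : Measurable (fun a => Ind (f a) (g a)) :=
  Ind_measurable.comp (hf.prodMk hg)

lemma GG_measurable :
    Measurable (fun w : (((ℝ×ℝ)×(ℝ×ℝ)) × ((ℝ×ℝ)×(ℝ×ℝ))) × (ℝ × ℝ) => GG w.1 w.2) := by
  unfold GG
  have m1 : Measurable (fun w : (((ℝ×ℝ)×(ℝ×ℝ)) × ((ℝ×ℝ)×(ℝ×ℝ))) × (ℝ × ℝ) => w.2.1) :=
    measurable_snd.fst
  have m2 : Measurable (fun w : (((ℝ×ℝ)×(ℝ×ℝ)) × ((ℝ×ℝ)×(ℝ×ℝ))) × (ℝ × ℝ) => w.2.2) :=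
    measurable_snd.snd
  exact
    (((measurable_Ind2 measurable_fst.fst.fst.fst m1).sub
        (measurable_Ind2 measurable_fst.fst.snd.fst m1)).mul
      ((measurable_Ind2 measurable_fst.snd.fst.fst m1).sub
        (measurable_Ind2 measurable_fst.snd.snd.fst m1))).mul
    (((measurable_Ind2 measurable_fst.fst.fst.snd m2).sub
        (measurable_Ind2 measurable_fst.fst.snd.snd m2)).mul
      ((measurable_Ind2 measurable_fst.snd.fst.snd m2).sub
        (measurable_Ind2 measurable_fst.snd.snd.snd m2)))

theorem stmt1 (μ : Measure (ℝ × ℝ)) [IsProbabilityMeasure μ]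
    (hx : Integrable (fun p : ℝ × ℝ => p.1 ^ 2) μ)
    (hy : Integrable (fun p : ℝ × ℝ => p.2 ^ 2) μ)
    (hxy : Integrable (fun p : ℝ × ℝ => p.1 ^ 2 * p.2 ^ 2) μ) :
    (1 / 4) *
        ((∫ q : (ℝ × ℝ) × (ℝ × ℝ), |q.1.1 - q.2.1| * |q.1.2 - q.2.2| ∂(μ.prod μ)) -
            2 * (∫ p : ℝ × ℝ, gfun (μ.map Prod.fst) p.1 * gfun (μ.map Prod.snd) p.2 ∂μ) +
          mfun (μ.map Prod.fst) * mfun (μ.map Prod.snd)) =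
      ∫ x : ℝ, ∫ y : ℝ,
        ((μ {p : ℝ × ℝ | p.1 ≤ x ∧ p.2 ≤ y}).toReal -
            ((μ.map Prod.fst) (Set.Iic x)).toReal * ((μ.map Prod.snd) (Set.Iic y)).toReal) ^ 2 := by
  -- Basic integrability facts
  have habsx : Integrable (fun p : ℝ × ℝ => |p.1|) μ := by
    refine (((hx.add (integrable_const 1)).div_const 2).mono'
      measurable_fst.abs.aestronglyMeasurable (ae_of_all _ fun p => ?_))
    rw [Real.norm_eq_abs, abs_abs]
    have h := sq_nonneg (|p.1| - 1)
    have h2 : |p.1| ^ 2 = p.1 ^ 2 := sq_abs p.1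
    simp only [Pi.add_apply, Pi.div_apply]
    nlinarith
  have habsy : Integrable (fun p : ℝ × ℝ => |p.2|) μ := by
    refine (((hy.add (integrable_const 1)).div_const 2).mono'
      measurable_snd.abs.aestronglyMeasurable (ae_of_all _ fun p => ?_))
    rw [Real.norm_eq_abs, abs_abs]
    have h := sq_nonneg (|p.2| - 1)
    have h2 : |p.2| ^ 2 = p.2 ^ 2 := sq_abs p.2
    simp only [Pi.add_apply, Pi.div_apply]
    nlinarith
  have habsxy : Integrable (fun p : ℝ × ℝ => |p.1| * |p.2|) μ := by
    refine (((hxy.add (integrable_const 1)).div_const 2).mono'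
      (measurable_fst.abs.mul measurable_snd.abs).aestronglyMeasurable
      (ae_of_all _ fun p => ?_))
    rw [Real.norm_eq_abs]
    rw [abs_of_nonneg (by positivity)]
    have h := sq_nonneg (|p.1| * |p.2| - 1)
    have h2 : (|p.1| * |p.2|) ^ 2 = p.1 ^ 2 * p.2 ^ 2 := by
      rw [mul_pow, sq_abs, sq_abs]
    simp only [Pi.add_apply, Pi.div_apply]
    nlinarith
  have h1 : Integrable (fun t : ℝ => |t|) (μ.map Prod.fst) :=
    (integrable_map_measure measurable_abs.aestronglyMeasurable
      measurable_fst.aemeasurable).2 habsx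
  have h2 : Integrable (fun t : ℝ => |t|) (μ.map Prod.snd) :=
    (integrable_map_measure measurable_abs.aestronglyMeasurable
      measurable_snd.aemeasurable).2 habsy
  have m12x : Integrable (fun p : ℝ × ℝ => |p.1|)
      ((μ.map Prod.fst).prod (μ.map Prod.snd)) := by
    simpa using h1.mul_prod (integrable_const (1:ℝ))
  have m12y : Integrable (fun p : ℝ × ℝ => |p.2|)
      ((μ.map Prod.fst).prod (μ.map Prod.snd)) := by
    simpa using (integrable_const (1:ℝ)).mul_prod h2
  have m12xy : Integrable (fun p : ℝ × ℝ => |p.1| * |p.2|)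
      ((μ.map Prod.fst).prod (μ.map Prod.snd)) := h1.mul_prod h2
  have hI2 : Integrable f4 (μ.prod μ) := int_f4 habsx habsy habsxy habsx habsy habsxy
  have hI3 : Integrable f4 (μ.prod ((μ.map Prod.fst).prod (μ.map Prod.snd))) :=
    int_f4 habsx habsy habsxy m12x m12y m12xy
  have hI4 : Integrable f4 (((μ.map Prod.fst).prod (μ.map Prod.snd)).prod
      ((μ.map Prod.fst).prod (μ.map Prod.snd))) :=
    int_f4 m12x m12y m12xy m12x m12y m12xy
  -- The sixteen terms
  -- μ₁₂ terms
  have AE' := mp_int_eq ((mpP1 μ).prod (mpP2 μ)) f4_measurable.aestronglyMeasurable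
  have iAE : Integrable (fun q => tA q * tE q) ((μ.prod μ).prod (μ.prod μ)) := AE'.2 hI2
  have vAE : ∫ q, tA q * tE q ∂((μ.prod μ).prod (μ.prod μ)) = ∫ z, f4 z ∂(μ.prod μ) := AE'.1
  have BF' := mp_int_eq ((mpP2 μ).prod (mpP1 μ)) f4_measurable.aestronglyMeasurable
  have iBF : Integrable (fun q => tB q * tF q) ((μ.prod μ).prod (μ.prod μ)) := BF'.2 hI2
  have vBF : ∫ q, tB q * tF q ∂((μ.prod μ).prod (μ.prod μ)) = ∫ z, f4 z ∂(μ.prod μ) := BF'.1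
  have CG' := mp_int_eq ((mpP1 μ).prod (mpP1 μ)) f4_measurable.aestronglyMeasurable
  have iCG : Integrable (fun q => tC q * tG q) ((μ.prod μ).prod (μ.prod μ)) := CG'.2 hI2
  have vCG : ∫ q, tC q * tG q ∂((μ.prod μ).prod (μ.prod μ)) = ∫ z, f4 z ∂(μ.prod μ) := CG'.1
  have DH' := mp_int_eq ((mpP2 μ).prod (mpP2 μ)) f4_measurable.aestronglyMeasurable
  have iDH : Integrable (fun q => tD q * tH q) ((μ.prod μ).prod (μ.prod μ)) := DH'.2 hI2
  have vDH : ∫ q, tD q * tH q ∂((μ.prod μ).prod (μ.prod μ)) = ∫ z, f4 z ∂(μ.prod μ) := DH'.1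
  -- m₁·m₂ terms
  have AF' := mp_int_eq ((mc1 μ).prod (mc2 μ)) f4_measurable.aestronglyMeasurable
  have iAF : Integrable (fun q => tA q * tF q) ((μ.prod μ).prod (μ.prod μ)) := AF'.2 hI4
  have vAF : ∫ q, tA q * tF q ∂((μ.prod μ).prod (μ.prod μ))
      = ∫ z, f4 z ∂(((μ.map Prod.fst).prod (μ.map Prod.snd)).prod
        ((μ.map Prod.fst).prod (μ.map Prod.snd))) := AF'.1
  have BE' := mp_int_eq ((mc2 μ).prod (mc1 μ)) f4_measurable.aestronglyMeasurable
  have iBE : Integrable (fun q => tB q * tE q) ((μ.prod μ).prod (μ.prod μ)) := BE'.2 hI4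
  have vBE : ∫ q, tB q * tE q ∂((μ.prod μ).prod (μ.prod μ))
      = ∫ z, f4 z ∂(((μ.map Prod.fst).prod (μ.map Prod.snd)).prod
        ((μ.map Prod.fst).prod (μ.map Prod.snd))) := BE'.1
  have CH' := mp_int_eq ((mc1 μ).prod (mc1 μ)) f4_measurable.aestronglyMeasurable
  have iCH : Integrable (fun q => tC q * tH q) ((μ.prod μ).prod (μ.prod μ)) := CH'.2 hI4
  have vCH : ∫ q, tC q * tH q ∂((μ.prod μ).prod (μ.prod μ))
      = ∫ z, f4 z ∂(((μ.map Prod.fst).prod (μ.map Prod.snd)).prod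
        ((μ.map Prod.fst).prod (μ.map Prod.snd))) := CH'.1
  have DG' := mp_int_eq ((mc2 μ).prod (mc2 μ)) f4_measurable.aestronglyMeasurable
  have iDG : Integrable (fun q => tD q * tG q) ((μ.prod μ).prod (μ.prod μ)) := DG'.2 hI4
  have vDG : ∫ q, tD q * tG q ∂((μ.prod μ).prod (μ.prod μ))
      = ∫ z, f4 z ∂(((μ.map Prod.fst).prod (μ.map Prod.snd)).prod
        ((μ.map Prod.fst).prod (μ.map Prod.snd))) := DG'.1
  -- μ₃ terms (straight)
  have AG' := mp_int_eq ((mpP1 μ).prod (mc2 μ)) f4_measurable.aestronglyMeasurable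
  have iAG : Integrable (fun q => tA q * tG q) ((μ.prod μ).prod (μ.prod μ)) := AG'.2 hI3
  have vAG : ∫ q, tA q * tG q ∂((μ.prod μ).prod (μ.prod μ))
      = ∫ z, f4 z ∂(μ.prod ((μ.map Prod.fst).prod (μ.map Prod.snd))) := AG'.1
  have CE' := mp_int_eq ((mpP1 μ).prod (mc1 μ)) f4_measurable.aestronglyMeasurable
  have iCE : Integrable (fun q => tC q * tE q) ((μ.prod μ).prod (μ.prod μ)) := CE'.2 hI3
  have vCE : ∫ q, tC q * tE q ∂((μ.prod μ).prod (μ.prod μ))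
      = ∫ z, f4 z ∂(μ.prod ((μ.map Prod.fst).prod (μ.map Prod.snd))) := CE'.1
  have BH' := mp_int_eq ((mpP2 μ).prod (mc1 μ)) f4_measurable.aestronglyMeasurable
  have iBH : Integrable (fun q => tB q * tH q) ((μ.prod μ).prod (μ.prod μ)) := BH'.2 hI3
  have vBH : ∫ q, tB q * tH q ∂((μ.prod μ).prod (μ.prod μ))
      = ∫ z, f4 z ∂(μ.prod ((μ.map Prod.fst).prod (μ.map Prod.snd))) := BH'.1
  have DF' := mp_int_eq ((mpP2 μ).prod (mc2 μ)) f4_measurable.aestronglyMeasurable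
  have iDF : Integrable (fun q => tD q * tF q) ((μ.prod μ).prod (μ.prod μ)) := DF'.2 hI3
  have vDF : ∫ q, tD q * tF q ∂((μ.prod μ).prod (μ.prod μ))
      = ∫ z, f4 z ∂(μ.prod ((μ.map Prod.fst).prod (μ.map Prod.snd))) := DF'.1
  -- μ₃ terms (with swap)
  have AH' := mp_int_eq (((mpP2 μ).prod (mc1 μ)).comp Measure.measurePreserving_swap)
    f4_measurable.aestronglyMeasurable
  have eAH : (fun q : ((ℝ×ℝ)×(ℝ×ℝ)) × ((ℝ×ℝ)×(ℝ×ℝ)) =>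
      f4 ((Prod.map Prod.snd (Prod.map Prod.fst Prod.snd) ∘ Prod.swap) q))
      = fun q => tA q * tH q := by
    funext q
    show |q.2.2.1 - q.1.1.1| * |q.2.2.2 - q.1.2.2| = tA q * tH q
    unfold tA tH
    rw [abs_sub_comm q.2.2.1 q.1.1.1, abs_sub_comm q.2.2.2 q.1.2.2]
  have iAH : Integrable (fun q => tA q * tH q) ((μ.prod μ).prod (μ.prod μ)) := by
    rw [← eAH]; exact AH'.2 hI3
  have vAH : ∫ q, tA q * tH q ∂((μ.prod μ).prod (μ.prod μ))
      = ∫ z, f4 z ∂(μ.prod ((μ.map Prod.fst).prod (μ.map Prod.snd))) := by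
    rw [← eAH]; exact AH'.1
  have BG' := mp_int_eq (((mpP1 μ).prod (mc2 μ)).comp Measure.measurePreserving_swap)
    f4_measurable.aestronglyMeasurable
  have eBG : (fun q : ((ℝ×ℝ)×(ℝ×ℝ)) × ((ℝ×ℝ)×(ℝ×ℝ)) =>
      f4 ((Prod.map Prod.fst (fun r : (ℝ×ℝ)×(ℝ×ℝ) => (r.2.1, r.1.2)) ∘ Prod.swap) q))
      = fun q => tB q * tG q := by
    funext q
    show |q.2.1.1 - q.1.2.1| * |q.2.1.2 - q.1.1.2| = tB q * tG q
    unfold tB tG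
    rw [abs_sub_comm q.2.1.1 q.1.2.1, abs_sub_comm q.2.1.2 q.1.1.2]
  have iBG : Integrable (fun q => tB q * tG q) ((μ.prod μ).prod (μ.prod μ)) := by
    rw [← eBG]; exact BG'.2 hI3
  have vBG : ∫ q, tB q * tG q ∂((μ.prod μ).prod (μ.prod μ))
      = ∫ z, f4 z ∂(μ.prod ((μ.map Prod.fst).prod (μ.map Prod.snd))) := by
    rw [← eBG]; exact BG'.1
  have CF' := mp_int_eq (((mpP1 μ).prod (mc1 μ)).comp Measure.measurePreserving_swap)
    f4_measurable.aestronglyMeasurable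
  have eCF : (fun q : ((ℝ×ℝ)×(ℝ×ℝ)) × ((ℝ×ℝ)×(ℝ×ℝ)) =>
      f4 ((Prod.map Prod.fst (Prod.map Prod.fst Prod.snd) ∘ Prod.swap) q))
      = fun q => tC q * tF q := by
    funext q
    show |q.2.1.1 - q.1.1.1| * |q.2.1.2 - q.1.2.2| = tC q * tF q
    unfold tC tF
    rw [abs_sub_comm q.2.1.1 q.1.1.1, abs_sub_comm q.2.1.2 q.1.2.2]
  have iCF : Integrable (fun q => tC q * tF q) ((μ.prod μ).prod (μ.prod μ)) := by
    rw [← eCF]; exact CF'.2 hI3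
  have vCF : ∫ q, tC q * tF q ∂((μ.prod μ).prod (μ.prod μ))
      = ∫ z, f4 z ∂(μ.prod ((μ.map Prod.fst).prod (μ.map Prod.snd))) := by
    rw [← eCF]; exact CF'.1
  have DE' := mp_int_eq (((mpP2 μ).prod (mc2 μ)).comp Measure.measurePreserving_swap)
    f4_measurable.aestronglyMeasurable
  have eDE : (fun q : ((ℝ×ℝ)×(ℝ×ℝ)) × ((ℝ×ℝ)×(ℝ×ℝ)) =>
      f4 ((Prod.map Prod.snd (fun r : (ℝ×ℝ)×(ℝ×ℝ) => (r.2.1, r.1.2)) ∘ Prod.swap) q))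
      = fun q => tD q * tE q := by
    funext q
    show |q.2.2.1 - q.1.2.1| * |q.2.2.2 - q.1.1.2| = tD q * tE q
    unfold tD tE
    rw [abs_sub_comm q.2.2.1 q.1.2.1, abs_sub_comm q.2.2.2 q.1.1.2]
  have iDE : Integrable (fun q => tD q * tE q) ((μ.prod μ).prod (μ.prod μ)) := by
    rw [← eDE]; exact DE'.2 hI3
  have vDE : ∫ q, tD q * tE q ∂((μ.prod μ).prod (μ.prod μ))
      = ∫ z, f4 z ∂(μ.prod ((μ.map Prod.fst).prod (μ.map Prod.snd))) := by
    rw [← eDE]; exact DE'.1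
  -- Integrability of the big function on μ⁴ × (ℝ × ℝ)
  have intGGq : ∀ q, Integrable (fun z : ℝ × ℝ => GG q z) (volume.prod volume) :=
    fun q => (intU q.1.1.1 q.1.2.1 q.2.1.1 q.2.2.1).mul_prod
      (intU q.1.1.2 q.1.2.2 q.2.1.2 q.2.2.2)
  have normval : ∀ q : ((ℝ×ℝ)×(ℝ×ℝ)) × ((ℝ×ℝ)×(ℝ×ℝ)),
      ∫ z : ℝ × ℝ, ‖GG q z‖ ∂(volume.prod volume)
        = (∫ x, |(Ind q.1.1.1 x - Ind q.1.2.1 x) * (Ind q.2.1.1 x - Ind q.2.2.1 x)|)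
          * (∫ y, |(Ind q.1.1.2 y - Ind q.1.2.2 y) * (Ind q.2.1.2 y - Ind q.2.2.2 y)|) := by
    intro q
    have e : (fun z : ℝ × ℝ => ‖GG q z‖)
        = fun z => (fun x => |(Ind q.1.1.1 x - Ind q.1.2.1 x) * (Ind q.2.1.1 x - Ind q.2.2.1 x)|) z.1
            * (fun y => |(Ind q.1.1.2 y - Ind q.1.2.2 y) * (Ind q.2.1.2 y - Ind q.2.2.2 y)|) z.2 := by
      funext z
      rw [Real.norm_eq_abs]
      unfold GG
      rw [abs_mul]
    rw [e]
    exact integral_prod_mul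
      (fun x => |(Ind q.1.1.1 x - Ind q.1.2.1 x) * (Ind q.2.1.1 x - Ind q.2.2.1 x)|)
      (fun y => |(Ind q.1.1.2 y - Ind q.1.2.2 y) * (Ind q.2.1.2 y - Ind q.2.2.2 y)|)
  have c1 : Integrable (fun P : (ℝ×ℝ)×(ℝ×ℝ) => |P.1.1|) (μ.prod μ) :=
    ((mpP1 μ).integrable_comp measurable_fst.abs.aestronglyMeasurable).2 habsx
  have c2 : Integrable (fun P : (ℝ×ℝ)×(ℝ×ℝ) => |P.2.1|) (μ.prod μ) :=
    ((mpP2 μ).integrable_comp measurable_fst.abs.aestronglyMeasurable).2 habsx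
  have c3 : Integrable (fun P : (ℝ×ℝ)×(ℝ×ℝ) => |P.1.2|) (μ.prod μ) :=
    ((mpP1 μ).integrable_comp measurable_snd.abs.aestronglyMeasurable).2 habsy
  have c4 : Integrable (fun P : (ℝ×ℝ)×(ℝ×ℝ) => |P.2.2|) (μ.prod μ) :=
    ((mpP2 μ).integrable_comp measurable_snd.abs.aestronglyMeasurable).2 habsy
  have d1 : Integrable (fun P : (ℝ×ℝ)×(ℝ×ℝ) => |P.2.1 - P.1.1|) (μ.prod μ) := by
    refine (c1.add c2).mono'
      ((measurable_snd.fst.sub measurable_fst.fst).abs).aestronglyMeasurable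
      (ae_of_all _ fun P => ?_)
    rw [Real.norm_eq_abs, abs_abs]
    have := abs_sub_le' P.2.1 P.1.1
    simp only [Pi.add_apply]
    linarith
  have d2 : Integrable (fun P : (ℝ×ℝ)×(ℝ×ℝ) => |P.2.2 - P.1.2|) (μ.prod μ) := by
    refine (c3.add c4).mono'
      ((measurable_snd.snd.sub measurable_fst.snd).abs).aestronglyMeasurable
      (ae_of_all _ fun P => ?_)
    rw [Real.norm_eq_abs, abs_abs]
    have := abs_sub_le' P.2.2 P.1.2
    simp only [Pi.add_apply]
    linarith
  have dom : Integrable (fun q : ((ℝ×ℝ)×(ℝ×ℝ)) × ((ℝ×ℝ)×(ℝ×ℝ)) =>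
      |q.1.2.1 - q.1.1.1| * |q.2.2.2 - q.2.1.2|) ((μ.prod μ).prod (μ.prod μ)) :=
    d1.mul_prod d2
  have GGint : Integrable (fun w : (((ℝ×ℝ)×(ℝ×ℝ)) × ((ℝ×ℝ)×(ℝ×ℝ))) × (ℝ × ℝ) => GG w.1 w.2)
      (((μ.prod μ).prod (μ.prod μ)).prod (volume.prod volume)) := by
    refine (integrable_prod_iff GG_measurable.aestronglyMeasurable).2
      ⟨ae_of_all _ intGGq, ?_⟩
    refine dom.mono'
      (GG_measurable.norm.stronglyMeasurable.integral_prod_right').aestronglyMeasurable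
      (ae_of_all _ fun q => ?_)
    rw [Real.norm_eq_abs, abs_of_nonneg (integral_nonneg fun z => norm_nonneg _)]
    rw [normval q]
    exact mul_le_mul (int_absU_le _ _ _ _) (int_absU_le2 _ _ _ _)
      (integral_nonneg fun y => abs_nonneg _) (abs_nonneg _)
  -- pointwise identity for the squared covariance
  have keyz : ∀ z : ℝ × ℝ,
      ((μ {p : ℝ × ℝ | p.1 ≤ z.1 ∧ p.2 ≤ z.2}).toReal -
          ((μ.map Prod.fst) (Set.Iic z.1)).toReal * ((μ.map Prod.snd) (Set.Iic z.2)).toReal) ^ 2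
        = (1/4) * ∫ q, GG q z ∂((μ.prod μ).prod (μ.prod μ)) := by
    intro z
    rw [covrep μ z.1 z.2]
    have e2 : ∫ q, GG q z ∂((μ.prod μ).prod (μ.prod μ))
        = (∫ P, (Ind P.1.1 z.1 - Ind P.2.1 z.1) * (Ind P.1.2 z.2 - Ind P.2.2 z.2) ∂(μ.prod μ))
          * (∫ P, (Ind P.1.1 z.1 - Ind P.2.1 z.1) * (Ind P.1.2 z.2 - Ind P.2.2 z.2) ∂(μ.prod μ)) := by
      rw [← integral_prod_mul
        (fun P : (ℝ×ℝ)×(ℝ×ℝ) => (Ind P.1.1 z.1 - Ind P.2.1 z.1) * (Ind P.1.2 z.2 - Ind P.2.2 z.2))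
        (fun P : (ℝ×ℝ)×(ℝ×ℝ) => (Ind P.1.1 z.1 - Ind P.2.1 z.1) * (Ind P.1.2 z.2 - Ind P.2.2 z.2))]
      congr 1
      funext q
      unfold GG
      ring
    rw [e2]
    ring
  -- integrability of the inner integral and of the squared covariance
  have intKz : Integrable (fun z : ℝ × ℝ => ∫ q, GG q z ∂((μ.prod μ).prod (μ.prod μ)))
      (volume.prod volume) := GGint.integral_prod_right
  have intK2 : Integrable (fun z : ℝ × ℝ =>
      ((μ {p : ℝ × ℝ | p.1 ≤ z.1 ∧ p.2 ≤ z.2}).toReal -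
          ((μ.map Prod.fst) (Set.Iic z.1)).toReal * ((μ.map Prod.snd) (Set.Iic z.2)).toReal) ^ 2)
      (volume.prod volume) := by
    refine (intKz.const_mul (1/4)).congr (ae_of_all _ fun z => ?_)
    exact (keyz z).symm
  -- reduce the iterated integral to the product integral
  have fub := integral_integral (f := fun x y : ℝ =>
      ((μ {p : ℝ × ℝ | p.1 ≤ x ∧ p.2 ≤ y}).toReal -
          ((μ.map Prod.fst) (Set.Iic x)).toReal * ((μ.map Prod.snd) (Set.Iic y)).toReal) ^ 2)
    intK2
  rw [fub]
  rw [show (fun z : ℝ × ℝ =>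
      ((μ {p : ℝ × ℝ | p.1 ≤ z.1 ∧ p.2 ≤ z.2}).toReal -
          ((μ.map Prod.fst) (Set.Iic z.1)).toReal * ((μ.map Prod.snd) (Set.Iic z.2)).toReal) ^ 2)
    = fun z => (1/4) * ∫ q, GG q z ∂((μ.prod μ).prod (μ.prod μ)) from funext keyz]
  rw [integral_const_mul]
  rw [← integral_integral_swap (f := fun q z => GG q z) GGint]
  -- compute the inner integral over z
  have inner : (fun q : ((ℝ×ℝ)×(ℝ×ℝ)) × ((ℝ×ℝ)×(ℝ×ℝ)) =>
      ∫ z, GG q z ∂(volume.prod volume))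
      = fun q => (1/4) * ((tA q * tE q + tB q * tF q + tC q * tG q + tD q * tH q)
          + (tA q * tF q + tB q * tE q + tC q * tH q + tD q * tG q)
          - (tA q * tG q + tA q * tH q + tB q * tG q + tB q * tH q
            + tC q * tE q + tC q * tF q + tD q * tE q + tD q * tF q)) := by
    funext q
    have e : ∫ z, GG q z ∂(volume.prod volume)
        = (∫ x, (Ind q.1.1.1 x - Ind q.1.2.1 x) * (Ind q.2.1.1 x - Ind q.2.2.1 x))
          * (∫ y, (Ind q.1.1.2 y - Ind q.1.2.2 y) * (Ind q.2.1.2 y - Ind q.2.2.2 y)) :=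
      integral_prod_mul
        (fun x => (Ind q.1.1.1 x - Ind q.1.2.1 x) * (Ind q.2.1.1 x - Ind q.2.2.1 x))
        (fun y => (Ind q.1.1.2 y - Ind q.1.2.2 y) * (Ind q.2.1.2 y - Ind q.2.2.2 y))
    rw [e, intU_val, intU_val]
    unfold tA tB tC tD tE tF tG tH
    ring
  rw [inner, integral_const_mul]
  -- split the integral
  have iP1a : Integrable (fun q => tA q * tE q + tB q * tF q) ((μ.prod μ).prod (μ.prod μ)) :=
    iAE.add iBF
  have iP1b : Integrable (fun q => tA q * tE q + tB q * tF q + tC q * tG q)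
      ((μ.prod μ).prod (μ.prod μ)) := iP1a.add iCG
  have iP1 : Integrable (fun q => tA q * tE q + tB q * tF q + tC q * tG q + tD q * tH q)
      ((μ.prod μ).prod (μ.prod μ)) := iP1b.add iDH
  have iP2a : Integrable (fun q => tA q * tF q + tB q * tE q) ((μ.prod μ).prod (μ.prod μ)) :=
    iAF.add iBE
  have iP2b : Integrable (fun q => tA q * tF q + tB q * tE q + tC q * tH q)
      ((μ.prod μ).prod (μ.prod μ)) := iP2a.add iCH
  have iP2 : Integrable (fun q => tA q * tF q + tB q * tE q + tC q * tH q + tD q * tG q)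
      ((μ.prod μ).prod (μ.prod μ)) := iP2b.add iDG
  have iP3a : Integrable (fun q => tA q * tG q + tA q * tH q) ((μ.prod μ).prod (μ.prod μ)) :=
    iAG.add iAH
  have iP3b : Integrable (fun q => tA q * tG q + tA q * tH q + tB q * tG q)
      ((μ.prod μ).prod (μ.prod μ)) := iP3a.add iBG
  have iP3c : Integrable (fun q => tA q * tG q + tA q * tH q + tB q * tG q + tB q * tH q)
      ((μ.prod μ).prod (μ.prod μ)) := iP3b.add iBH
  have iP3d : Integrable (fun q => tA q * tG q + tA q * tH q + tB q * tG q + tB q * tH q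
      + tC q * tE q) ((μ.prod μ).prod (μ.prod μ)) := iP3c.add iCE
  have iP3e : Integrable (fun q => tA q * tG q + tA q * tH q + tB q * tG q + tB q * tH q
      + tC q * tE q + tC q * tF q) ((μ.prod μ).prod (μ.prod μ)) := iP3d.add iCF
  have iP3f : Integrable (fun q => tA q * tG q + tA q * tH q + tB q * tG q + tB q * tH q
      + tC q * tE q + tC q * tF q + tD q * tE q) ((μ.prod μ).prod (μ.prod μ)) := iP3e.add iDE
  have iP3 : Integrable (fun q => tA q * tG q + tA q * tH q + tB q * tG q + tB q * tH q
      + tC q * tE q + tC q * tF q + tD q * tE q + tD q * tF q)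
      ((μ.prod μ).prod (μ.prod μ)) := iP3f.add iDF
  have iP12 : Integrable (fun q => (tA q * tE q + tB q * tF q + tC q * tG q + tD q * tH q)
      + (tA q * tF q + tB q * tE q + tC q * tH q + tD q * tG q))
      ((μ.prod μ).prod (μ.prod μ)) := iP1.add iP2
  rw [integral_sub iP12 iP3, integral_add iP1 iP2,
    integral_add iP1b iDH, integral_add iP1a iCG, integral_add iAE iBF,
    integral_add iP2b iDG, integral_add iP2a iCH, integral_add iAF iBE,
    integral_add iP3f iDF, integral_add iP3e iDE, integral_add iP3d iCF,
    integral_add iP3c iCE, integral_add iP3b iBH, integral_add iP3a iBG,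
    integral_add iAG iAH,
    vAE, vBF, vCG, vDH, vAF, vBE, vCH, vDG, vAG, vAH, vBG, vBH, vCE, vCF, vDE, vDF]
  -- identify the three quantities
  have eq2 : (∫ q : (ℝ × ℝ) × (ℝ × ℝ), |q.1.1 - q.2.1| * |q.1.2 - q.2.2| ∂(μ.prod μ))
      = ∫ z, f4 z ∂(μ.prod μ) := rfl
  have eq3 : (∫ p : ℝ × ℝ, gfun (μ.map Prod.fst) p.1 * gfun (μ.map Prod.snd) p.2 ∂μ)
      = ∫ z, f4 z ∂(μ.prod ((μ.map Prod.fst).prod (μ.map Prod.snd))) := (L3val μ hI3).symm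
  have eq4 : mfun (μ.map Prod.fst) * mfun (μ.map Prod.snd)
      = ∫ z, f4 z ∂(((μ.map Prod.fst).prod (μ.map Prod.snd)).prod
        ((μ.map Prod.fst).prod (μ.map Prod.snd))) := (L4val μ hI4 h1 h2).symm
  rw [eq2, eq3, eq4]
  ring
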